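/- arXiv:1903.12322 — 5 statements merged into one kernel-verified Lean document; each statement's English description precedes it below -/
import Mathlib

section
/- Let f : ℝ^d → ℝ be continuously differentiable with ∇f being M-Lipschitz, and suppose m := liminf_{‖x‖→∞} ⟨∇f(x), x⟩/‖x‖² satisfies 0 < m < ∞. Then for every y ∈ ℝ^d and every m' < m, there exists a constant c(y) ≥ 0 such that ⟨∇f(x) − ∇f(y), x − y⟩ ≥ m'‖x − y‖² − c(y) for all x ∈ ℝ^d. -/
/-!
Write `h x = ⟪g x - g y, x - y⟫ - m' ‖x - y‖²` with `g = ∇f`. Expanding, `h x` differs from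
`⟪g x, x⟫ - m' ‖x‖²` by terms that are at most affine in `‖x‖`, because `g` grows at most linearly.
For `m' < m₁ < m` the liminf gives `⟪g x, x⟫ ≥ m₁ ‖x‖²` far out, so the quadratic gap
`(m₁ - m') ‖x‖²` makes `h ≥ 0` outside some ball. Inside the ball, the Lipschitz bound
`⟪g x - g y, x - y⟫ ≥ -M ‖x - y‖²` bounds `h` below.
-/

open Filter
open scoped RealInnerProductSpace

lemma tendsto_mul_sq_sub_affine_atTop {a : ℝ} (ha : 0 < a) (B C : ℝ) :
    Tendsto (fun t : ℝ => a * t ^ 2 - (B * t + C)) atTop atTop := by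
  have hlin : Tendsto (fun t : ℝ => a * t - B) atTop atTop :=
    tendsto_atTop_add_const_right _ _ (tendsto_id.const_mul_atTop ha)
  refine tendsto_atTop_add_const_right _ (-C) (tendsto_id.atTop_mul_atTop₀ hlin) |>.congr ?_
  intro t
  simp only [id]
  ring

lemma eventually_mul_norm_sq_le {E : Type*} [Norm E] {u : E → ℝ} {b : ℝ}
    (h : ∀ᶠ x in comap norm atTop, b < u x / ‖x‖ ^ 2) :
    ∀ᶠ x in comap norm atTop, b * ‖x‖ ^ 2 ≤ u x := by
  filter_upwards [h, (eventually_gt_atTop 0).comap norm] with x hx hpos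
  exact ((lt_div_iff₀ (by positivity)).mp hx).le

section LipschitzMap

variable {E : Type*} [NormedAddCommGroup E] [InnerProductSpace ℝ E] {g : E → E} {M : ℝ}

lemma neg_mul_norm_sq_le_inner_sub (hg : ∀ x y, ‖g x - g y‖ ≤ M * ‖x - y‖) (x y : E) :
    -(M * ‖x - y‖ ^ 2) ≤ ⟪g x - g y, x - y⟫ := by
  have hcs := neg_le_of_abs_le (abs_real_inner_le_norm (g x - g y) (x - y))
  have := mul_le_mul_of_nonneg_right (hg x y) (norm_nonneg (x - y))
  nlinarith

lemma isBoundedUnder_ge_inner_div_norm_sq (hg : ∀ x y, ‖g x - g y‖ ≤ M * ‖x - y‖) :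
    (comap norm atTop).IsBoundedUnder (· ≥ ·) (fun x : E => ⟪g x, x⟫ / ‖x‖ ^ 2) := by
  refine ⟨-(M + ‖g 0‖), eventually_map.mpr ?_⟩
  filter_upwards [(eventually_ge_atTop 1).comap norm] with x hx
  rw [ge_iff_le, le_div_iff₀ (by positivity)]
  have hlip := neg_mul_norm_sq_le_inner_sub hg x 0
  have hcs := neg_le_of_abs_le (abs_real_inner_le_norm (g 0) x)
  rw [sub_zero, inner_sub_left] at hlip
  have := mul_le_mul_of_nonneg_left (show ‖x‖ ≤ ‖x‖ ^ 2 by nlinarith) (norm_nonneg (g 0))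
  nlinarith

lemma exists_affine_le_inner_sub_sub (hg : ∀ x y, ‖g x - g y‖ ≤ M * ‖x - y‖) (y : E)
    (m' : ℝ) : ∃ B C : ℝ, ∀ x : E,
      ⟪g x, x⟫ - m' * ‖x‖ ^ 2 - (B * ‖x‖ + C) ≤ ⟪g x - g y, x - y⟫ - m' * ‖x - y‖ ^ 2 := by
  refine ⟨M * ‖y‖ + ‖(2 * m') • y - g y‖, ‖g 0‖ * ‖y‖ - ⟪g y, y⟫ + m' * ‖y‖ ^ 2, fun x => ?_⟩
  have hexpand : ⟪g x - g y, x - y⟫ - m' * ‖x - y‖ ^ 2 =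
      ⟪g x, x⟫ - m' * ‖x‖ ^ 2 - ⟪g x, y⟫ + ⟪(2 * m') • y - g y, x⟫ + ⟪g y, y⟫ - m' * ‖y‖ ^ 2 := by
    simp only [inner_sub_left, inner_sub_right, inner_smul_left, norm_sub_sq_real,
      real_inner_comm x y, RCLike.conj_to_real]
    ring
  have hgx : ‖g x‖ ≤ ‖g 0‖ + M * ‖x‖ := by
    simpa using (norm_le_norm_add_norm_sub' (g x) (g 0)).trans (add_le_add_right (hg x 0) _)
  have hxy := real_inner_le_norm (g x) y
  have hyx := neg_le_of_abs_le (abs_real_inner_le_norm ((2 * m') • y - g y) x)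
  have := mul_le_mul_of_nonneg_right hgx (norm_nonneg y)
  rw [hexpand]
  nlinarith

lemma eventually_mul_norm_sub_sq_le_inner_sub (hg : ∀ x y, ‖g x - g y‖ ≤ M * ‖x - y‖) (y : E)
    {m' m₁ : ℝ} (hm' : m' < m₁) (hfar : ∀ᶠ x in comap norm atTop, m₁ * ‖x‖ ^ 2 ≤ ⟪g x, x⟫) :
    ∀ᶠ x in comap norm atTop, m' * ‖x - y‖ ^ 2 ≤ ⟪g x - g y, x - y⟫ := by
  obtain ⟨B, C, hBC⟩ := exists_affine_le_inner_sub_sub hg y m'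
  have hgap := ((tendsto_mul_sq_sub_affine_atTop (sub_pos.mpr hm') B C).comp
    (tendsto_comap (f := (norm : E → ℝ)))).eventually_ge_atTop 0
  filter_upwards [hfar, hgap] with x hx hgapx
  have := hBC x
  simp only [Function.comp_apply] at hgapx
  nlinarith

lemma mul_norm_sub_sq_sub_le_inner_sub (hg : ∀ x y, ‖g x - g y‖ ≤ M * ‖x - y‖) (m' : ℝ)
    {R : ℝ} {x : E} (hx : ‖x‖ ≤ R) (y : E) :
    m' * ‖x - y‖ ^ 2 - |M + m'| * (R + ‖y‖) ^ 2 ≤ ⟪g x - g y, x - y⟫ := by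
  have hlip := neg_mul_norm_sq_le_inner_sub hg x y
  have hdist : ‖x - y‖ ≤ R + ‖y‖ := (norm_sub_le x y).trans (by linarith)
  have hsq : ‖x - y‖ ^ 2 ≤ (R + ‖y‖) ^ 2 := pow_le_pow_left₀ (norm_nonneg _) hdist 2
  have := mul_le_mul_of_nonneg_left hsq (abs_nonneg (M + m'))
  nlinarith [le_abs_self (M + m'), sq_nonneg ‖x - y‖]

end LipschitzMap

theorem stmt_0_general {d : ℕ} (f : EuclideanSpace ℝ (Fin d) → ℝ) (M : ℝ)
    (hLip : ∀ x y : EuclideanSpace ℝ (Fin d),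
      ‖gradient f x - gradient f y‖ ≤ M * ‖x - y‖)
    (m : ℝ)
    (hm : m = Filter.liminf
      (fun x : EuclideanSpace ℝ (Fin d) => ⟪gradient f x, x⟫ / ‖x‖ ^ 2)
      (Filter.comap (fun x : EuclideanSpace ℝ (Fin d) => ‖x‖) Filter.atTop)) :
    ∀ y : EuclideanSpace ℝ (Fin d), ∀ m' < m, ∃ c : ℝ, 0 ≤ c ∧
      ∀ x : EuclideanSpace ℝ (Fin d),
        ⟪gradient f x - gradient f y, x - y⟫ ≥ m' * ‖x - y‖ ^ 2 - c := by
  intro y m' hm'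
  obtain ⟨m₁, hm'm₁, hm₁m⟩ := exists_between hm'
  have hfar : ∀ᶠ x in comap norm atTop, m₁ * ‖x‖ ^ 2 ≤ ⟪gradient f x, x⟫ :=
    eventually_mul_norm_sq_le <|
      eventually_lt_of_lt_liminf (hm ▸ hm₁m) (isBoundedUnder_ge_inner_div_norm_sq hLip)
  obtain ⟨R, hR⟩ := eventually_atTop.mp <| eventually_comap.mp <|
    eventually_mul_norm_sub_sq_le_inner_sub hLip y hm'm₁ hfar
  refine ⟨|M + m'| * (R + ‖y‖) ^ 2, by positivity, fun x => ?_⟩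
  rcases le_or_gt R ‖x‖ with hx | hx
  · linarith [hR ‖x‖ hx x rfl, show 0 ≤ |M + m'| * (R + ‖y‖) ^ 2 by positivity]
  · exact mul_norm_sub_sq_sub_le_inner_sub hLip m' hx.le y

/-- Under Lipschitz gradient and positive finite tail-liminf `m`,
for every `y` and `m' < m` there is `c ≥ 0` with
`⟪∇f x − ∇f y, x − y⟫ ≥ m'‖x − y‖² − c` for all `x`. -/
theorem stmt_0 {d : ℕ} (f : EuclideanSpace ℝ (Fin d) → ℝ) (M : ℝ)
    (hf : ContDiff ℝ 1 f)
    (hLip : ∀ x y : EuclideanSpace ℝ (Fin d),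
      ‖gradient f x - gradient f y‖ ≤ M * ‖x - y‖)
    (m : ℝ)
    (hm : m = Filter.liminf
      (fun x : EuclideanSpace ℝ (Fin d) => ⟪gradient f x, x⟫ / ‖x‖ ^ 2)
      (Filter.comap (fun x : EuclideanSpace ℝ (Fin d) => ‖x‖) Filter.atTop))
    (hmpos : 0 < m) :
    ∀ y : EuclideanSpace ℝ (Fin d), ∀ m' < m, ∃ c : ℝ, 0 ≤ c ∧
      ∀ x : EuclideanSpace ℝ (Fin d),
        ⟪gradient f x - gradient f y, x - y⟫ ≥ m' * ‖x - y‖ ^ 2 - c :=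
  stmt_0_general f M hLip m hm
end

section
/- Let f : ℝ^d → ℝ be C¹ with M-Lipschitz gradient and critical point x*. For h > 0 and θ ∈ [0,1] with either θ ≥ 1/2, or θ < 1/2 and h < 4m/(M²(1−2θ)), where additionally ⟨∇f(x) − ∇f(x*), x − x*⟩ ≥ m‖x−x*‖² − c for all x with m > 0 and c ≥ 0, the function T₁(x) − T₂(x) tends to −∞ as ‖x‖ → ∞, where T₁(x) = ‖x − x* − (h(1−θ)/2)∇f(x)‖ and T₂(x) = ‖x − x* + (hθ/2)∇f(x)‖. -/
/-!
Write `y = x - x*`, `g = ∇f(x)`, `T₁ = ‖y - a • g‖`, `T₂ = ‖y + b • g‖` with `a + b = h / 2`.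
Then `T₁² - T₂² = -h ⟪g, y⟫ + h² (1 - 2θ) / 4 ‖g‖²`, and the secant bound together with
`‖g‖ ≤ M ‖y‖` makes this at most `h c - ε ‖y‖²` for some `ε > 0`; the step-size condition is
exactly what makes `ε` positive. On the other hand `T₁ + T₂ = O(‖y‖)`, so
`T₁ - T₂ = (T₁² - T₂²) / (T₁ + T₂) ≤ (h c - ε ‖y‖²) / (C ‖y‖) → -∞`.
-/

open Filter
open scoped RealInnerProductSpace

lemma sub_le_div_of_sq_sub_sq_le {u v s D : ℝ} (hv : 0 ≤ v) (hs : s ≤ 0)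
    (hsq : u ^ 2 - v ^ 2 ≤ s) (hD : 0 < D) (hsum : u + v ≤ D) : u - v ≤ s / D := by
  have huv : u - v ≤ 0 := by nlinarith
  rw [le_div_iff₀ hD]
  nlinarith

lemma tendsto_sub_quadratic_div_atBot (K : ℝ) {ε C : ℝ} (hε : 0 < ε) (hC : 0 < C) :
    Tendsto (fun s : ℝ => (K - ε * s ^ 2) / (C * s)) atTop atBot := by
  have hsplit : (fun s : ℝ => K / (C * s) + -(ε / C) * s) =ᶠ[atTop]
      fun s => (K - ε * s ^ 2) / (C * s) := by
    filter_upwards [eventually_ne_atTop 0] with s hs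
    field_simp
    ring
  exact Tendsto.congr' hsplit <|
    (tendsto_const_nhds.div_atTop (tendsto_id.const_mul_atTop hC)).add_atBot
      (tendsto_id.const_mul_atTop_of_neg (neg_neg_of_pos (div_pos hε hC)))

lemma tendsto_sub_atBot_of_sq_sub_sq_le {α : Type*} {l : Filter α} {u v r : α → ℝ}
    {K ε C : ℝ} (hε : 0 < ε) (hC : 0 < C) (hr : Tendsto r l atTop)
    (hv : ∀ x, 0 ≤ v x) (hsq : ∀ x, u x ^ 2 - v x ^ 2 ≤ K - ε * r x ^ 2)
    (hsum : ∀ x, u x + v x ≤ C * r x) :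
    Tendsto (fun x => u x - v x) l atBot := by
  have hquad : Tendsto (fun s : ℝ => K - ε * s ^ 2) atTop atBot :=
    tendsto_atBot_add_const_left _ K
      ((tendsto_pow_atTop two_ne_zero).const_mul_atTop_of_neg (neg_neg_of_pos hε)) |>.congr
        fun s => by ring
  refine tendsto_atBot_mono' l ?_ ((tendsto_sub_quadratic_div_atBot K hε hC).comp hr)
  filter_upwards [hr.eventually_gt_atTop 0, hr.eventually (hquad.eventually_le_atBot 0)]
    with x hpos hneg
  exact sub_le_div_of_sq_sub_sq_le (hv x) hneg (hsq x) (mul_pos hC hpos) (hsum x)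

lemma stepSize_margin_pos {m M h θ : ℝ} (hm : 0 < m) (hh : 0 < h)
    (hcond : 1 / 2 ≤ θ ∨ (θ < 1 / 2 ∧ h < 4 * m / (M ^ 2 * (1 - 2 * θ)))) :
    0 < h * m - max (h ^ 2 * (1 - 2 * θ) / 4) 0 * M ^ 2 := by
  rcases hcond with hθ | ⟨hθ, hstep⟩
  · rw [max_eq_right (by nlinarith)]
    nlinarith
  · rw [max_eq_left (by nlinarith)]
    rcases (sq_nonneg M).eq_or_lt with hM | hM
    · rw [← hM, zero_mul, div_zero] at hstep
      linarith
    · have hstep' : h * (M ^ 2 * (1 - 2 * θ)) < 4 * m := (lt_div_iff₀ (by nlinarith)).mp hstep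
      nlinarith

lemma tendsto_norm_sub_comap_norm_atTop {E : Type*} [SeminormedAddCommGroup E] (x₀ : E) :
    Tendsto (fun x : E => ‖x - x₀‖) (comap (fun x : E => ‖x‖) atTop) atTop :=
  tendsto_atTop_mono (fun x => by linarith [norm_sub_norm_le x x₀])
    (tendsto_atTop_add_const_right _ (-‖x₀‖) tendsto_comap)

section InnerProductSpace

variable {E : Type*} [NormedAddCommGroup E] [InnerProductSpace ℝ E]

lemma norm_sub_smul_sq_sub_norm_add_smul_sq (y g : E) (a b : ℝ) :
    ‖y - a • g‖ ^ 2 - ‖y + b • g‖ ^ 2 = (a ^ 2 - b ^ 2) * ‖g‖ ^ 2 - 2 * (a + b) * ⟪g, y⟫ := by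
  rw [norm_sub_sq_real, norm_add_sq_real, real_inner_smul_right, real_inner_smul_right,
    norm_smul, norm_smul, Real.norm_eq_abs, Real.norm_eq_abs, mul_pow, mul_pow, sq_abs, sq_abs,
    real_inner_comm y g]
  ring

lemma norm_sq_sub_norm_sq_le {y g : E} {m c M h θ : ℝ} (hh : 0 ≤ h)
    (hsec : m * ‖y‖ ^ 2 - c ≤ ⟪g, y⟫) (hLip : ‖g‖ ≤ M * ‖y‖) :
    ‖y - (h * (1 - θ) / 2) • g‖ ^ 2 - ‖y + (h * θ / 2) • g‖ ^ 2
      ≤ h * c - (h * m - max (h ^ 2 * (1 - 2 * θ) / 4) 0 * M ^ 2) * ‖y‖ ^ 2 := by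
  have hg_sq : ‖g‖ ^ 2 ≤ M ^ 2 * ‖y‖ ^ 2 := by
    rw [← mul_pow]
    exact pow_le_pow_left₀ (norm_nonneg g) hLip 2
  have hcoeff : h ^ 2 * (1 - 2 * θ) / 4 * ‖g‖ ^ 2 ≤ max (h ^ 2 * (1 - 2 * θ) / 4) 0 * ‖g‖ ^ 2 :=
    mul_le_mul_of_nonneg_right (le_max_left _ _) (sq_nonneg _)
  have hmax : max (h ^ 2 * (1 - 2 * θ) / 4) 0 * ‖g‖ ^ 2
      ≤ max (h ^ 2 * (1 - 2 * θ) / 4) 0 * (M ^ 2 * ‖y‖ ^ 2) :=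
    mul_le_mul_of_nonneg_left hg_sq (le_max_right _ _)
  have hinner : h * (m * ‖y‖ ^ 2 - c) ≤ h * ⟪g, y⟫ := mul_le_mul_of_nonneg_left hsec hh
  rw [norm_sub_smul_sq_sub_norm_add_smul_sq]
  nlinarith

lemma norm_sub_smul_add_norm_add_smul_le {y g : E} {M h θ : ℝ} (hh : 0 ≤ h) (hθ0 : 0 ≤ θ)
    (hθ1 : θ ≤ 1) (hLip : ‖g‖ ≤ M * ‖y‖) :
    ‖y - (h * (1 - θ) / 2) • g‖ + ‖y + (h * θ / 2) • g‖ ≤ (2 + h * |M| / 2) * ‖y‖ := by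
  have hg : ‖g‖ ≤ |M| * ‖y‖ := hLip.trans (by gcongr; exact le_abs_self M)
  have ha : 0 ≤ h * (1 - θ) / 2 := by nlinarith
  have hb : 0 ≤ h * θ / 2 := by positivity
  calc ‖y - (h * (1 - θ) / 2) • g‖ + ‖y + (h * θ / 2) • g‖
      ≤ (‖y‖ + h * (1 - θ) / 2 * ‖g‖) + (‖y‖ + h * θ / 2 * ‖g‖) := by
        gcongr
        · exact (norm_sub_le _ _).trans_eq (by rw [norm_smul, Real.norm_of_nonneg ha])
        · exact (norm_add_le _ _).trans_eq (by rw [norm_smul, Real.norm_of_nonneg hb])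
    _ = 2 * ‖y‖ + h / 2 * ‖g‖ := by ring
    _ ≤ (2 + h * |M| / 2) * ‖y‖ := by nlinarith

end InnerProductSpace

theorem stmt_4_general {d : ℕ} (f : EuclideanSpace ℝ (Fin d) → ℝ)
    (xstar : EuclideanSpace ℝ (Fin d)) (m c M h θ : ℝ)
    (hcrit : gradient f xstar = 0)
    (hLip : ∀ x y : EuclideanSpace ℝ (Fin d),
      ‖gradient f x - gradient f y‖ ≤ M * ‖x - y‖)
    (hsec : ∀ x : EuclideanSpace ℝ (Fin d),
      ⟪gradient f x - gradient f xstar, x - xstar⟫ ≥ m * ‖x - xstar‖ ^ 2 - c)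
    (hm : 0 < m) (hh : 0 < h) (hθ0 : 0 ≤ θ) (hθ1 : θ ≤ 1)
    (hcond : 1 / 2 ≤ θ ∨ (θ < 1 / 2 ∧ h < 4 * m / (M ^ 2 * (1 - 2 * θ)))) :
    Filter.Tendsto
      (fun x : EuclideanSpace ℝ (Fin d) =>
        ‖x - xstar - (h * (1 - θ) / 2) • gradient f x‖
          - ‖x - xstar + (h * θ / 2) • gradient f x‖)
      (Filter.comap (fun x : EuclideanSpace ℝ (Fin d) => ‖x‖) Filter.atTop)
      Filter.atBot := by
  have hgrad : ∀ x, ‖gradient f x‖ ≤ M * ‖x - xstar‖ := fun x => by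
    simpa [hcrit] using hLip x xstar
  have hsec' : ∀ x, m * ‖x - xstar‖ ^ 2 - c ≤ ⟪gradient f x, x - xstar⟫ := fun x => by
    simpa [hcrit] using hsec x
  exact tendsto_sub_atBot_of_sq_sub_sq_le (stepSize_margin_pos hm hh hcond)
    (by positivity) (tendsto_norm_sub_comap_norm_atTop xstar)
    (fun _ => norm_nonneg _)
    (fun x => norm_sq_sub_norm_sq_le hh.le (hsec' x) (hgrad x))
    (fun x => norm_sub_smul_add_norm_add_smul_le hh.le hθ0 hθ1 (hgrad x))

/-- Under the stated step-size conditions, `T₁(x) − T₂(x) → −∞`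
as `‖x‖ → ∞`. -/
theorem stmt_4 {d : ℕ} (f : EuclideanSpace ℝ (Fin d) → ℝ)
    (xstar : EuclideanSpace ℝ (Fin d)) (m c M h θ : ℝ)
    (hf : ContDiff ℝ 1 f)
    (hcrit : gradient f xstar = 0)
    (hLip : ∀ x y : EuclideanSpace ℝ (Fin d),
      ‖gradient f x - gradient f y‖ ≤ M * ‖x - y‖)
    (hsec : ∀ x : EuclideanSpace ℝ (Fin d),
      ⟪gradient f x - gradient f xstar, x - xstar⟫ ≥ m * ‖x - xstar‖ ^ 2 - c)
    (hm : 0 < m) (hc : 0 ≤ c) (hh : 0 < h) (hθ0 : 0 ≤ θ) (hθ1 : θ ≤ 1)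
    (hcond : 1 / 2 ≤ θ ∨ (θ < 1 / 2 ∧ h < 4 * m / (M ^ 2 * (1 - 2 * θ)))) :
    Filter.Tendsto
      (fun x : EuclideanSpace ℝ (Fin d) =>
        ‖x - xstar - (h * (1 - θ) / 2) • gradient f x‖
          - ‖x - xstar + (h * θ / 2) • gradient f x‖)
      (Filter.comap (fun x : EuclideanSpace ℝ (Fin d) => ‖x‖) Filter.atTop)
      Filter.atBot :=
  stmt_4_general f xstar m c M h θ hcrit hLip hsec hm hh hθ0 hθ1 hcond
end

section
/- Let Q be a symmetric positive definite d×d real matrix, h > 0, θ ∈ [0,1]. Suppose V is a symmetric positive definite matrix satisfying V = (I + (hθ/2)Q)^{−2}[(I − (h(1−θ)/2)Q)² V + h I], with V commuting with Q. Then V = Q^{−1}(I + (h/2)(θ − 1/2)Q)^{−1}. In particular, when θ = 1/2, V = Q^{−1}. -/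
open Matrix

lemma smul_posSemidef' {d : ℕ} {Q : Matrix (Fin d) (Fin d) ℝ} (hQ : Q.PosDef)
    {c : ℝ} (hc : 0 ≤ c) : (c • Q).PosSemidef := by
  refine ⟨?_, fun x => ?_⟩
  · show (c • Q)ᴴ = c • Q
    rw [conjTranspose_smul, hQ.1.eq]
    simp
  · exact (hQ.posSemidef.smul hc).2 x

/-- The stationary covariance fixed-point equation of the θ-method
for a Gaussian target forces `V = Q⁻¹ (I + (h/2)(θ − 1/2) Q)⁻¹`; in particular
`V = Q⁻¹` when `θ = 1/2`. -/
theorem stmt_6 {d : ℕ} (Q V : Matrix (Fin d) (Fin d) ℝ) (h θ : ℝ)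
    (hQ : Q.PosDef) (hV : V.PosDef) (hh : 0 < h) (hθ0 : 0 ≤ θ) (hθ1 : θ ≤ 1)
    (hcomm : V * Q = Q * V)
    (hfix : V = ((1 + (h * θ / 2) • Q)⁻¹) ^ 2 *
      (((1 - (h * (1 - θ) / 2) • Q)) ^ 2 * V + h • (1 : Matrix (Fin d) (Fin d) ℝ))) :
    V = Q⁻¹ * (1 + (h / 2 * (θ - 1 / 2)) • Q)⁻¹ ∧
      (θ = 1 / 2 → V = Q⁻¹) := by
  have hApd : (1 + (h * θ / 2) • Q).PosDef :=
    Matrix.PosDef.add_posSemidef Matrix.PosDef.one (smul_posSemidef' hQ (by positivity))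
  have hAdet : IsUnit (1 + (h * θ / 2) • Q).det := isUnit_iff_ne_zero.mpr hApd.det_pos.ne'
  -- Step 1: A^2 * V = B^2 * V + h • 1
  have eq1 : (1 + (h * θ / 2) • Q) ^ 2 * V
      = (1 - (h * (1 - θ) / 2) • Q) ^ 2 * V + h • (1 : Matrix (Fin d) (Fin d) ℝ) := by
    have hAA : (1 + (h * θ / 2) • Q) ^ 2 * ((1 + (h * θ / 2) • Q)⁻¹) ^ 2 = 1 := by
      rw [pow_two, pow_two, Matrix.mul_assoc,
        ← Matrix.mul_assoc (1 + (h * θ / 2) • Q) (1 + (h * θ / 2) • Q)⁻¹,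
        Matrix.mul_nonsing_inv _ hAdet, Matrix.one_mul, Matrix.mul_nonsing_inv _ hAdet]
    conv_lhs => rw [hfix, ← Matrix.mul_assoc, hAA, Matrix.one_mul]
  -- Step 2: A^2 - B^2 = h • (M * Q)
  have key : (1 + (h * θ / 2) • Q) ^ 2 - (1 - (h * (1 - θ) / 2) • Q) ^ 2
      = h • ((1 + (h / 2 * (θ - 1 / 2)) • Q) * Q) := by
    simp only [pow_two, add_mul, mul_add, sub_mul, mul_sub, smul_mul_assoc,
      Matrix.mul_smul, mul_one, Matrix.one_mul, smul_smul, smul_add, smul_sub,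
      Matrix.mul_one, one_mul]
    match_scalars <;> ring
  -- Step 3: M * Q * V = 1
  have eq2 : (1 + (h / 2 * (θ - 1 / 2)) • Q) * Q * V = 1 := by
    have e3 : ((1 + (h * θ / 2) • Q) ^ 2 - (1 - (h * (1 - θ) / 2) • Q) ^ 2) * V
        = h • (1 : Matrix (Fin d) (Fin d) ℝ) := by
      rw [Matrix.sub_mul]
      exact sub_eq_of_eq_add' eq1
    rw [key, Matrix.smul_mul] at e3
    exact smul_right_injective _ hh.ne' e3
  have hinv : ((1 + (h / 2 * (θ - 1 / 2)) • Q) * Q)⁻¹ = V := Matrix.inv_eq_right_inv eq2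
  have hVeq : V = Q⁻¹ * (1 + (h / 2 * (θ - 1 / 2)) • Q)⁻¹ := by
    rw [← hinv, Matrix.mul_inv_rev]
  refine ⟨hVeq, fun hhalf => ?_⟩
  have hc3 : h / 2 * (θ - 1 / 2) = 0 := by rw [hhalf]; ring
  rw [hVeq, hc3, zero_smul, add_zero, inv_one, Matrix.mul_one]
end

section
/- Fix 0 < m ≤ M, θ ∈ [0,1], h > 0, and define ρ = max{ (1 − (h(1−θ)/2)m)/(1 + (hθ/2)m), ((h(1−θ)/2)M − 1)/((hθ/2)M + 1) }. If θ ≥ 1/2, then ρ < 1 for all h > 0. If θ < 1/2, then ρ < 1 if and only if h < 4/(M(1 − 2θ)). -/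
/-- Contraction factor `ρ < 1` for all `h > 0` when `θ ≥ 1/2`;
for `θ < 1/2`, `ρ < 1` iff `h < 4/(M(1 − 2θ))`. -/
theorem stmt_9 (m M h θ : ℝ) (hm : 0 < m) (hmM : m ≤ M) (hh : 0 < h)
    (hθ0 : 0 ≤ θ) (hθ1 : θ ≤ 1) :
    (1 / 2 ≤ θ →
      max ((1 - h * (1 - θ) / 2 * m) / (1 + h * θ / 2 * m))
          ((h * (1 - θ) / 2 * M - 1) / (h * θ / 2 * M + 1)) < 1) ∧
    (θ < 1 / 2 →
      (max ((1 - h * (1 - θ) / 2 * m) / (1 + h * θ / 2 * m))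
          ((h * (1 - θ) / 2 * M - 1) / (h * θ / 2 * M + 1)) < 1
        ↔ h < 4 / (M * (1 - 2 * θ)))) := by
  have hM : 0 < M := lt_of_lt_of_le hm hmM
  have dm : 0 < 1 + h * θ / 2 * m := by nlinarith [mul_nonneg (mul_nonneg hh.le hθ0) hm.le]
  have dM : 0 < h * θ / 2 * M + 1 := by nlinarith [mul_nonneg (mul_nonneg hh.le hθ0) hM.le]
  have hA : (1 - h * (1 - θ) / 2 * m) / (1 + h * θ / 2 * m) < 1 := by
    rw [div_lt_one dm]; nlinarith [mul_pos hh hm]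
  constructor
  · intro hθ
    refine max_lt hA ?_
    rw [div_lt_one dM]
    nlinarith [mul_nonneg (mul_nonneg hh.le (by linarith : (0:ℝ) ≤ 2 * θ - 1)) hM.le]
  · intro hθ
    have hden : 0 < M * (1 - 2 * θ) := by nlinarith
    constructor
    · intro hlt
      have hB := lt_of_le_of_lt (le_max_right ((1 - h * (1 - θ) / 2 * m) / (1 + h * θ / 2 * m)) _) hlt
      rw [div_lt_one dM] at hB
      rw [lt_div_iff₀ hden]; nlinarith
    · intro hlt
      refine max_lt hA ?_
      rw [div_lt_one dM]
      rw [lt_div_iff₀ hden] at hlt; nlinarith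
end

section
/- Let f : ℝ^d → ℝ be C¹, θ ∈ (1/2, 1], and suppose ∇f is M-Lipschitz and m-strongly monotone with 0 < m ≤ M. Let x* be the unique minimizer of f and define the sequence (x_t) by ∇f(x_{t+1}) = (1 − 1/θ)∇f(x_t). Then for all t, (m/M)·ρ^t·‖x_0 − x*‖ ≤ ‖x_t − x*‖ ≤ (M/m)·ρ^t·‖x_0 − x*‖, where ρ = 1/θ − 1 < 1; in particular x_t → x*. -/
open scoped RealInnerProductSpace

/-- The large-step-size limiting dynamics
`∇f(x_{t+1}) = (1 − 1/θ)∇f(x_t)` contract geometrically to the minimizer `x*`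
with rate `ρ = 1/θ − 1 < 1` when `θ ∈ (1/2, 1]`. -/
theorem stmt_14 {d : ℕ} (f : EuclideanSpace ℝ (Fin d) → ℝ) (m M θ : ℝ)
    (hf : ContDiff ℝ 1 f)
    (hm : 0 < m) (hmM : m ≤ M) (hθ0 : 1 / 2 < θ) (hθ1 : θ ≤ 1)
    (hstrong : ∀ x y : EuclideanSpace ℝ (Fin d),
      ⟪gradient f x - gradient f y, x - y⟫ ≥ m * ‖x - y‖ ^ 2)
    (hLip : ∀ x y : EuclideanSpace ℝ (Fin d),
      ‖gradient f x - gradient f y‖ ≤ M * ‖x - y‖)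
    (xstar : EuclideanSpace ℝ (Fin d))
    (hmin : ∀ x, f xstar ≤ f x)
    (x : ℕ → EuclideanSpace ℝ (Fin d))
    (hrec : ∀ t : ℕ, gradient f (x (t + 1)) = (1 - 1 / θ) • gradient f (x t)) :
    (1 / θ - 1 < 1) ∧
    (∀ t : ℕ,
      m / M * (1 / θ - 1) ^ t * ‖x 0 - xstar‖ ≤ ‖x t - xstar‖ ∧
      ‖x t - xstar‖ ≤ M / m * (1 / θ - 1) ^ t * ‖x 0 - xstar‖) ∧
    Filter.Tendsto x Filter.atTop (nhds xstar) := by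
  have hθpos : (0:ℝ) < θ := by linarith
  have hM : (0:ℝ) < M := lt_of_lt_of_le hm hmM
  set ρ : ℝ := 1 / θ - 1 with hρdef
  have hρ0 : 0 ≤ ρ := by
    have : 1 ≤ 1 / θ := by
      rw [le_div_iff₀ hθpos]; linarith
    rw [hρdef]; linarith
  have hρ1 : ρ < 1 := by
    have : 1 / θ < 2 := by
      rw [div_lt_iff₀ hθpos]; linarith
    rw [hρdef]; linarith
  -- gradient vanishes at the minimizer
  have hstar : gradient f xstar = 0 := by
    have hloc : IsLocalMin f xstar := by
      apply Filter.Eventually.of_forall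
      exact hmin
    have := hloc.fderiv_eq_zero
    simp [gradient, this]
  -- pointwise bounds via strong monotonicity and Lipschitz
  have hlow : ∀ y, m * ‖y - xstar‖ ≤ ‖gradient f y‖ := by
    intro y
    have h1 := hstrong y xstar
    have h2 := real_inner_le_norm (gradient f y - gradient f xstar) (y - xstar)
    rw [hstar, sub_zero] at h1 h2
    rcases eq_or_lt_of_le (norm_nonneg (y - xstar)) with h | h
    · rw [← h]; simp [norm_nonneg]
    · have := le_trans h1 h2
      nlinarith
  have hup : ∀ y, ‖gradient f y‖ ≤ M * ‖y - xstar‖ := by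
    intro y
    have := hLip y xstar
    rwa [hstar, sub_zero] at this
  -- geometric decay of gradient norm
  have hg : ∀ t : ℕ, ‖gradient f (x t)‖ = ρ ^ t * ‖gradient f (x 0)‖ := by
    intro t
    induction t with
    | zero => simp
    | succ n ih =>
      rw [hrec n, norm_smul, ih, pow_succ]
      have habs : ‖(1 - 1 / θ : ℝ)‖ = ρ := by
        rw [Real.norm_eq_abs, abs_sub_comm]
        exact abs_of_nonneg hρ0
      rw [habs]; ring
  have key : ∀ t : ℕ,
      m / M * ρ ^ t * ‖x 0 - xstar‖ ≤ ‖x t - xstar‖ ∧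
      ‖x t - xstar‖ ≤ M / m * ρ ^ t * ‖x 0 - xstar‖ := by
    intro t
    have hρt : (0:ℝ) ≤ ρ ^ t := pow_nonneg hρ0 t
    have h1 : m * ‖x t - xstar‖ ≤ ρ ^ t * ‖gradient f (x 0)‖ := by
      rw [← hg t]; exact hlow (x t)
    have h2 : ρ ^ t * ‖gradient f (x 0)‖ ≤ M * ‖x t - xstar‖ := by
      rw [← hg t]; exact hup (x t)
    have h3 : m * ‖x 0 - xstar‖ ≤ ‖gradient f (x 0)‖ := hlow (x 0)
    have h4 : ‖gradient f (x 0)‖ ≤ M * ‖x 0 - xstar‖ := hup (x 0)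
    constructor
    · rw [div_mul_eq_mul_div, div_mul_eq_mul_div, div_le_iff₀ hM]
      nlinarith [mul_le_mul_of_nonneg_left h3 hρt]
    · rw [div_mul_eq_mul_div, div_mul_eq_mul_div, le_div_iff₀ hm]
      nlinarith [mul_le_mul_of_nonneg_left h4 hρt]
  refine ⟨hρ1, key, ?_⟩
  rw [tendsto_iff_norm_sub_tendsto_zero]
  apply squeeze_zero (fun t => norm_nonneg _) (fun t => (key t).2)
  have h0 : Filter.Tendsto (fun t : ℕ => ρ ^ t) Filter.atTop (nhds 0) :=
    tendsto_pow_atTop_nhds_zero_of_lt_one hρ0 hρ1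
  have := h0.const_mul (M / m)
  simp only [mul_zero] at this
  convert this.mul_const ‖x 0 - xstar‖ using 2 <;> ring
end
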